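/- arXiv:math/0404346 — 5 statements merged into one kernel-verified Lean document; each statement's English description precedes it below -/
import Mathlib

section
/- For all points z, z′ in the hyperbolic upper half-plane ℍ, every real number ξ, and every sequence (w_n) in ℍ such that (w_n : ℂ) → (ξ : ℂ), the sequence dist(z, w_n) − dist(z′, w_n) converges, with limit log(|(z:ℂ) − ξ|² / Im z) − log(|(z′:ℂ) − ξ|² / Im z′). -/
/-!
Since `arsinh x = log (x + √(x² + 1))`, for `s > 0` one has
`arsinh (a / s) + log s = log (a + √(a² + s²))`, which stays bounded as `s → 0`.
With `s = √(Im w)` and `a = |z - w| / (2 √(Im z))` this shows that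
`d(z, w) + log (Im w)` converges to `log (|z - ξ|² / Im z)` as `w → ξ`; the term `log (Im w)`,
which diverges, is the same for `z` and `z'` and cancels in the difference.
-/

open Filter Topology

namespace Real

lemma add_sqrt_sq_add_sq_pos (a : ℝ) {s : ℝ} (hs : 0 < s) : 0 < a + √(a ^ 2 + s ^ 2) := by
  have : |a| < √(a ^ 2 + s ^ 2) := by
    rw [← sqrt_sq_eq_abs]
    exact sqrt_lt_sqrt (sq_nonneg a) (by linarith [pow_pos hs 2])
  linarith [neg_abs_le a]

lemma arsinh_div_add_log (a : ℝ) {s : ℝ} (hs : 0 < s) :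
    arsinh (a / s) + log s = log (a + √(a ^ 2 + s ^ 2)) := by
  have hsqrt : √(1 + (a / s) ^ 2) = √(a ^ 2 + s ^ 2) / s := by
    rw [show 1 + (a / s) ^ 2 = (a ^ 2 + s ^ 2) / s ^ 2 by field_simp; ring,
      sqrt_div' _ (sq_nonneg s), sqrt_sq hs.le]
  rw [arsinh, hsqrt, ← add_div, log_div (add_sqrt_sq_add_sq_pos a hs).ne' hs.ne']
  ring

lemma tendsto_arsinh_div_add_log {α : Type*} {l : Filter α} {a s : α → ℝ} {a₀ : ℝ}
    (ha : Tendsto a l (𝓝 a₀)) (ha₀ : 0 < a₀) (hs : Tendsto s l (𝓝 0))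
    (hs_pos : ∀ᶠ x in l, 0 < s x) :
    Tendsto (fun x => arsinh (a x / s x) + log (s x)) l (𝓝 (log (2 * a₀))) := by
  have hsum : Tendsto (fun x => a x + √(a x ^ 2 + s x ^ 2)) l (𝓝 (2 * a₀)) := by
    have := ha.add (((ha.pow 2).add (hs.pow 2)).sqrt)
    rwa [zero_pow two_ne_zero, add_zero, sqrt_sq ha₀.le, ← two_mul] at this
  refine (hsum.log (by positivity)).congr' ?_
  filter_upwards [hs_pos] with x hx
  exact (arsinh_div_add_log (a x) hx).symm

end Real

namespace UpperHalfPlane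

lemma dist_add_log_im (u w : UpperHalfPlane) :
    dist u w + Real.log w.im =
      2 * (Real.arsinh (dist (u : ℂ) w / (2 * √u.im) / √w.im) + Real.log √w.im) := by
  rw [dist_eq, Real.log_sqrt w.im_pos.le, Real.sqrt_mul u.im_pos.le, div_div, mul_assoc]
  ring

lemma norm_coe_sub_ofReal_pos (u : UpperHalfPlane) (ξ : ℝ) : 0 < ‖(u : ℂ) - ξ‖ := by
  refine norm_pos_iff.2 fun h => u.im_pos.ne' ?_
  simpa using congrArg Complex.im h

lemma tendsto_dist_add_log_im {α : Type*} {l : Filter α} {w : α → UpperHalfPlane} {ξ : ℝ}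
    (hw : Tendsto (fun x => (w x : ℂ)) l (𝓝 (ξ : ℂ))) (u : UpperHalfPlane) :
    Tendsto (fun x => dist u (w x) + Real.log (w x).im) l
      (𝓝 (Real.log (‖(u : ℂ) - ξ‖ ^ 2 / u.im))) := by
  have him : Tendsto (fun x => (w x).im) l (𝓝 0) := by
    simpa [Function.comp_def] using (Complex.continuous_im.tendsto _).comp hw
  have hdist : Tendsto (fun x => dist (u : ℂ) (w x)) l (𝓝 ‖(u : ℂ) - ξ‖) := by
    simpa [dist_eq_norm] using (tendsto_const_nhds (x := (u : ℂ))).dist hw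
  have hlim := ((Real.tendsto_arsinh_div_add_log (hdist.div_const (2 * √u.im))
    (by have := norm_coe_sub_ofReal_pos u ξ; have := u.im_pos; positivity)
    (by simpa using him.sqrt) (.of_forall fun x => Real.sqrt_pos.2 (w x).im_pos)).const_mul 2)
  have hval : 2 * Real.log (2 * (‖(u : ℂ) - ξ‖ / (2 * √u.im))) =
      Real.log (‖(u : ℂ) - ξ‖ ^ 2 / u.im) := by
    have hsqrt : 2 * (‖(u : ℂ) - ξ‖ / (2 * √u.im)) = √(‖(u : ℂ) - ξ‖ ^ 2 / u.im) := by
      rw [Real.sqrt_div' _ u.im_pos.le, Real.sqrt_sq (norm_nonneg _)]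
      field_simp
    rw [hsqrt, Real.log_sqrt (by positivity)]
    ring
  rw [hval] at hlim
  simpa only [dist_add_log_im] using hlim

end UpperHalfPlane

/-- For points `z z'` in the hyperbolic upper half-plane, a boundary point
`ξ ∈ ℝ`, and any sequence `w n` in the upper half-plane converging (in `ℂ`) to `ξ`,
the differences `dist z (w n) - dist z' (w n)` of hyperbolic distances converge, with
limit `log (|z - ξ|² / Im z) - log (|z' - ξ|² / Im z')`. -/
theorem busemann_limit_exists (z z' : UpperHalfPlane) (ξ : ℝ) (w : ℕ → UpperHalfPlane)
    (hw : Tendsto (fun n => ((w n : ℂ))) atTop (𝓝 (ξ : ℂ))) :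
    Tendsto (fun n => dist z (w n) - dist z' (w n)) atTop
      (𝓝 (Real.log (‖(z : ℂ) - (ξ : ℂ)‖ ^ 2 / z.im)
          - Real.log (‖(z' : ℂ) - (ξ : ℂ)‖ ^ 2 / z'.im))) := by
  simpa only [add_sub_add_right_eq_sub] using
    (UpperHalfPlane.tendsto_dist_add_log_im hw z).sub (UpperHalfPlane.tendsto_dist_add_log_im hw z')
end

section
/- For every z in the hyperbolic upper half-plane ℍ, every real number ξ, and every sequence (w_n) in ℍ with (w_n : ℂ) → (ξ : ℂ), one has dist(z, w_n) − log(|(z:ℂ) − (w_n:ℂ)|² / (Im z · Im w_n)) → 0. -/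
/-!
Write `A = |z - w|`, `B = |z - w̄|` and `P = Im z · Im w`. The closed form
`exp (d(z, w) / 2) = (A + B) / (2√P)` turns `d(z, w) - log (A² / P)` into
`2 log ((A + B) / (2A))`, in which `P` no longer appears. As `w` tends to a real point `ξ`,
both `w` and `w̄` tend to `ξ`, so `A` and `B` have the same nonzero limit `|z - ξ|` and the
ratio tends to `1`.
-/

open Filter Topology Real ComplexConjugate

namespace UpperHalfPlane

lemma dist_sub_log_norm_sq_div_im_mul_im (z w : ℍ) :
    dist z w - log (‖(z : ℂ) - w‖ ^ 2 / (z.im * w.im)) =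
      2 * log ((dist (z : ℂ) w + dist (z : ℂ) (conj (w : ℂ))) / (2 * dist (z : ℂ) w)) := by
  rcases eq_or_ne z w with rfl | hzw
  · simp -- both sides vanish, the right one through `x / 0 = 0` and `log 0 = 0`
  have hA : 0 < dist (z : ℂ) w := dist_pos.2 (coe_injective.ne hzw)
  have hP : 0 < z.im * w.im := mul_pos z.im_pos w.im_pos
  have hdist : dist z w =
      2 * log ((dist (z : ℂ) w + dist (z : ℂ) (conj (w : ℂ))) / (2 * √(z.im * w.im))) := by
    rw [← exp_half_dist, log_exp]; ring
  have hlog : log (‖(z : ℂ) - w‖ ^ 2 / (z.im * w.im)) =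
      2 * log (dist (z : ℂ) w / √(z.im * w.im)) := by
    rw [← Complex.dist_eq, ← sq_sqrt hP.le, ← div_pow, log_pow]
    norm_num
  rw [hdist, hlog, ← mul_sub, ← log_div (by positivity) (by positivity)]
  congr 2
  field_simp

lemma tendsto_dist_add_dist_conj_div_dist {α : Type*} {l : Filter α} (z : ℍ) {ξ : ℝ}
    {w : α → ℍ} (hw : Tendsto (fun a ↦ (w a : ℂ)) l (𝓝 ξ)) :
    Tendsto (fun a ↦
        (dist (z : ℂ) (w a) + dist (z : ℂ) (conj (w a : ℂ))) / (2 * dist (z : ℂ) (w a)))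
      l (𝓝 1) := by
  have hconj : Tendsto (fun a ↦ conj (w a : ℂ)) l (𝓝 ξ) := by
    simpa [Function.comp_def] using (Complex.continuous_conj.tendsto _).comp hw
  have hξ : 0 < dist (z : ℂ) ξ :=
    dist_pos.2 fun h ↦ z.im_pos.ne' (by simpa using congrArg Complex.im h)
  have hA := (tendsto_const_nhds (x := (z : ℂ))).dist hw
  have hB := (tendsto_const_nhds (x := (z : ℂ))).dist hconj
  have := (hA.add hB).div (hA.const_mul 2) (by positivity)
  rw [← two_mul, div_self (by positivity)] at this
  exact this

end UpperHalfPlane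

/-- For `z` in the hyperbolic upper half-plane, a boundary point `ξ ∈ ℝ`,
and any sequence `w n` in the upper half-plane converging (in `ℂ`) to `ξ`, one has
`dist z (w n) - log (|z - w n|² / (Im z · Im (w n))) → 0`. -/
theorem hyperbolic_dist_asymptotic (z : UpperHalfPlane) (ξ : ℝ) (w : ℕ → UpperHalfPlane)
    (hw : Tendsto (fun n => ((w n : ℂ))) atTop (𝓝 (ξ : ℂ))) :
    Tendsto (fun n => dist z (w n)
        - Real.log (‖(z : ℂ) - ((w n : ℂ))‖ ^ 2 / (z.im * (w n).im)))
      atTop (𝓝 0) := by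
  simp_rw [UpperHalfPlane.dist_sub_log_norm_sq_div_im_mul_im]
  simpa using ((continuousAt_log one_ne_zero).tendsto.comp
    (UpperHalfPlane.tendsto_dist_add_dist_conj_div_dist z hw)).const_mul 2
end

section
/- For z ∈ ℂ define α_z componentwise on finitely supported f : Γ → C(Λ, ℂ) by (α_z f)_g(ξ) = e^{i z D(x, x g⁻¹, ξ)}·f_g(ξ). Then for all finitely supported f, f′ : Γ → C(Λ, ℂ) and all t ∈ ℝ: τ(f · α_{t+iδ}(f′)) = τ(α_t(f′) · f). -/
open MeasureTheory
open scoped BigOperators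

/-- The product of the algebraic crossed product `C(Λ) ⋊ Γ`, at the level of functions
`Γ → Λ → ℂ`: `(f·f′)_γ(ξ) = ∑_{g g′ = γ} f_g(ξ)·f′_{g′}(ξg)`. -/
noncomputable def crossMul {Γ Λ : Type*} [Group Γ] (actΛ : Λ → Γ → Λ)
    (f f' : Γ → Λ → ℂ) : Γ → Λ → ℂ :=
  fun γ ξ => ∑ᶠ g : Γ, f g ξ * f' (g⁻¹ * γ) (actΛ ξ g)

/-- The complex one-parameter family `α_z`: `(α_z f)_g(ξ) = e^{i z D(x, x g⁻¹, ξ)}·f_g(ξ)`. -/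
noncomputable def alphaC {Γ X Λ : Type*} [Group Γ] (D : X → X → Λ → ℝ)
    (actX : X → Γ → X) (x : X) (z : ℂ) (f : Γ → Λ → ℂ) : Γ → Λ → ℂ :=
  fun g ξ => Complex.exp (Complex.I * z * (D x (actX x g⁻¹) ξ : ℂ)) * f g ξ

set_option linter.unusedSectionVars false

section Aux
variable {Γ X Λ : Type*} [Group Γ]
    [TopologicalSpace Λ] [CompactSpace Λ] [T2Space Λ]
    [MeasurableSpace Λ] [BorelSpace Λ]

lemma aux_integrable (μ : Measure Λ) [IsFiniteMeasure μ] {φ : Λ → ℂ} (hφ : Continuous φ) :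
    Integrable φ μ :=
  hφ.integrable_of_hasCompactSupport (IsClosed.isCompact (isClosed_tsupport _))

/-- Per-term change of variables. -/
lemma aux_term (actX : X → Γ → X)
    (actΛ : Λ → Γ → Λ) (hΛ1 : ∀ ξ, actΛ ξ 1 = ξ)
    (hΛmul : ∀ (ξ : Λ) (g h : Γ), actΛ (actΛ ξ g) h = actΛ ξ (g * h))
    (hΛcont : ∀ g : Γ, Continuous fun ξ => actΛ ξ g)
    (D : X → X → Λ → ℝ) (hDcont : ∀ x x', Continuous (D x x'))
    (x : X) (δ : ℝ) (μ : Measure Λ) [IsFiniteMeasure μ]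
    (hμ : ∀ g : Γ, Measure.map (fun ξ => actΛ ξ g) μ
      = μ.withDensity (fun ξ => ENNReal.ofReal (Real.exp (δ * D x (actX x g) ξ))))
    (t : ℝ) (g : Γ) (φ ψ : Λ → ℂ) (hφ : Continuous φ) (hψ : Continuous ψ) :
    ∫ ξ, φ ξ * (Complex.exp (Complex.I * ((t : ℂ) + Complex.I * (δ : ℂ))
        * (D x (actX x g) (actΛ ξ g) : ℂ)) * ψ (actΛ ξ g)) ∂μ
    = ∫ ξ, Complex.exp (Complex.I * (t : ℂ) * (D x (actX x g) ξ : ℂ)) * ψ ξ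
        * φ (actΛ ξ g⁻¹) ∂μ := by
  have hact : ∀ ξ : Λ, actΛ (actΛ ξ g) g⁻¹ = ξ := fun ξ => by
    rw [hΛmul, mul_inv_cancel, hΛ1]
  set G : Λ → ℂ := fun η => φ (actΛ η g⁻¹) *
      (Complex.exp (Complex.I * ((t : ℂ) + Complex.I * (δ : ℂ))
        * (D x (actX x g) η : ℂ)) * ψ η) with hG
  have hGcont : Continuous G := by
    apply Continuous.mul (hφ.comp (hΛcont g⁻¹))
    exact (Complex.continuous_exp.comp (by continuity)).mul hψ
  have step1 : ∫ ξ, φ ξ * (Complex.exp (Complex.I * ((t : ℂ) + Complex.I * (δ : ℂ))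
        * (D x (actX x g) (actΛ ξ g) : ℂ)) * ψ (actΛ ξ g)) ∂μ
      = ∫ ξ, G (actΛ ξ g) ∂μ := by
    refine integral_congr_ae (Filter.Eventually.of_forall fun ξ => ?_)
    simp only [hG, hact]
  rw [step1, ← integral_map (hΛcont g).aemeasurable hGcont.aestronglyMeasurable, hμ g]
  have hw : Measurable fun ξ => Real.toNNReal (Real.exp (δ * D x (actX x g) ξ)) :=
    (Real.continuous_exp.comp ((hDcont x (actX x g)).const_smul δ)).measurable.real_toNNReal
  have : (fun ξ => ENNReal.ofReal (Real.exp (δ * D x (actX x g) ξ)))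
      = fun ξ => ((Real.toNNReal (Real.exp (δ * D x (actX x g) ξ)) : NNReal) : ENNReal) := rfl
  rw [this, integral_withDensity_eq_integral_smul hw G]
  refine integral_congr_ae (Filter.Eventually.of_forall fun η => ?_)
  have h1 : (Real.toNNReal (Real.exp (δ * D x (actX x g) η)) : ℝ)
      = Real.exp (δ * D x (actX x g) η) := Real.coe_toNNReal _ (Real.exp_pos _).le
  simp only []
  rw [NNReal.smul_def, h1]
  simp only [hG]
  rw [Complex.real_smul, Complex.ofReal_exp]
  rw [show Complex.exp (↑(δ * D x (actX x g) η)) *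
      (φ (actΛ η g⁻¹) * (Complex.exp (Complex.I * ((t : ℂ) + Complex.I * (δ : ℂ))
        * (D x (actX x g) η : ℂ)) * ψ η))
      = (Complex.exp (↑(δ * D x (actX x g) η)) * Complex.exp (Complex.I * ((t : ℂ)
        + Complex.I * (δ : ℂ)) * (D x (actX x g) η : ℂ))) * ψ η * φ (actΛ η g⁻¹) by ring,
    ← Complex.exp_add]
  congr 2
  push_cast
  ring_nf
  rw [Complex.I_sq]
  ring

end Aux

/-- the δ-KMS boundary condition for the functional `τ(f) = ∫_Λ f_e dμ`
built from a measure `μ` with the Patterson–Sullivan quasi-invariance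
`(R_g)_* μ = e^{δ D(x, xg, ·)} μ`: for all finitely supported `f f' : Γ → C(Λ, ℂ)`
and `t ∈ ℝ`, `τ(f · α_{t+iδ}(f′)) = τ(α_t(f′) · f)`. -/
theorem kms_boundary_condition {Γ X Λ : Type*} [Group Γ]
    [TopologicalSpace Λ] [CompactSpace Λ] [T2Space Λ]
    [MeasurableSpace Λ] [BorelSpace Λ]
    (actX : X → Γ → X) (hX1 : ∀ x, actX x 1 = x)
    (hXmul : ∀ (x : X) (g h : Γ), actX (actX x g) h = actX x (g * h))
    (actΛ : Λ → Γ → Λ) (hΛ1 : ∀ ξ, actΛ ξ 1 = ξ)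
    (hΛmul : ∀ (ξ : Λ) (g h : Γ), actΛ (actΛ ξ g) h = actΛ ξ (g * h))
    (hΛcont : ∀ g : Γ, Continuous fun ξ => actΛ ξ g)
    (D : X → X → Λ → ℝ)
    (hDcont : ∀ x x', Continuous (D x x'))
    (hD1 : ∀ x x' ξ, D x x' ξ = - D x' x ξ)
    (hD2 : ∀ x x' x'' ξ, D x x' ξ + D x' x'' ξ = D x x'' ξ)
    (hD3 : ∀ (x x' : X) (ξ : Λ) (γ : Γ), D (actX x γ) (actX x' γ) (actΛ ξ γ) = D x x' ξ)
    (x : X) (δ : ℝ) (μ : Measure Λ) [IsFiniteMeasure μ]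
    (hμ : ∀ g : Γ, Measure.map (fun ξ => actΛ ξ g) μ
      = μ.withDensity (fun ξ => ENNReal.ofReal (Real.exp (δ * D x (actX x g) ξ))))
    (f f' : Γ → C(Λ, ℂ))
    (hf : (Function.support f).Finite) (hf' : (Function.support f').Finite)
    (t : ℝ) :
    ∫ ξ, crossMul actΛ (fun g => ⇑(f g))
        (alphaC D actX x ((t : ℂ) + Complex.I * (δ : ℂ)) (fun g => ⇑(f' g))) 1 ξ ∂μ
      = ∫ ξ, crossMul actΛ (alphaC D actX x (t : ℂ) (fun g => ⇑(f' g)))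
          (fun g => ⇑(f g)) 1 ξ ∂μ := by
  classical
  set s : Finset Γ := hf.toFinset ∪ hf'.toFinset with hs
  set u : Finset Γ := s ∪ s.image Inv.inv with husdef
  have hu : ∀ g ∈ u, g⁻¹ ∈ u := by
    intro g hg
    rcases Finset.mem_union.1 hg with h | h
    · exact Finset.mem_union.2 (Or.inr (Finset.mem_image_of_mem _ h))
    · rcases Finset.mem_image.1 h with ⟨a, ha, rfl⟩
      exact Finset.mem_union.2 (Or.inl (by simpa using ha))
  -- the two families of terms
  set L : Γ → Λ → ℂ := fun g ξ => f g ξ *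
      (alphaC D actX x ((t : ℂ) + Complex.I * (δ : ℂ)) (fun g => ⇑(f' g))) (g⁻¹ * 1) (actΛ ξ g)
    with hLdef
  set R : Γ → Λ → ℂ := fun g ξ =>
      (alphaC D actX x (t : ℂ) (fun g => ⇑(f' g))) g ξ * f (g⁻¹ * 1) (actΛ ξ g) with hRdef
  have hLcont : ∀ g, Continuous (L g) := by
    intro g
    refine (f g).continuous.mul (Continuous.mul ?_ ((f' _).continuous.comp (hΛcont g)))
    exact Complex.continuous_exp.comp (continuous_const.mul
      (Complex.continuous_ofReal.comp ((hDcont _ _).comp (hΛcont g))))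
  have hRcont : ∀ g, Continuous (R g) := by
    intro g
    refine Continuous.mul (Continuous.mul ?_ (f' g).continuous)
      ((f _).continuous.comp (hΛcont g))
    exact Complex.continuous_exp.comp (continuous_const.mul
      (Complex.continuous_ofReal.comp (hDcont _ _)))
  have hLsum : ∀ ξ, crossMul actΛ (fun g => ⇑(f g))
      (alphaC D actX x ((t : ℂ) + Complex.I * (δ : ℂ)) (fun g => ⇑(f' g))) 1 ξ
      = ∑ g ∈ u, L g ξ := by
    intro ξ
    refine finsum_eq_sum_of_support_subset _ fun g hg => ?_
    have : f g ≠ 0 := by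
      intro h0
      apply hg
      simp [hLdef, h0]
    exact Finset.mem_union.2 (Or.inl (Finset.mem_union.2 (Or.inl (hf.mem_toFinset.2 this))))
  have hRsum : ∀ ξ, crossMul actΛ (alphaC D actX x (t : ℂ) (fun g => ⇑(f' g)))
      (fun g => ⇑(f g)) 1 ξ = ∑ g ∈ u, R g ξ := by
    intro ξ
    refine finsum_eq_sum_of_support_subset _ fun g hg => ?_
    have : f' g ≠ 0 := by
      intro h0
      apply hg
      simp [hRdef, alphaC, h0]
    exact Finset.mem_union.2 (Or.inl (Finset.mem_union.2 (Or.inr (hf'.mem_toFinset.2 this))))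
  calc ∫ ξ, crossMul actΛ (fun g => ⇑(f g))
        (alphaC D actX x ((t : ℂ) + Complex.I * (δ : ℂ)) (fun g => ⇑(f' g))) 1 ξ ∂μ
      = ∑ g ∈ u, ∫ ξ, L g ξ ∂μ := by
        rw [integral_congr_ae (Filter.Eventually.of_forall hLsum)]
        exact integral_finset_sum u fun g _ => aux_integrable μ (hLcont g)
    _ = ∑ g ∈ u, ∫ ξ, R g⁻¹ ξ ∂μ := by
        refine Finset.sum_congr rfl fun g _ => ?_
        have := aux_term actX actΛ hΛ1 hΛmul hΛcont D hDcont x δ μ hμ t g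
          (⇑(f g)) (⇑(f' g⁻¹)) (f g).continuous (f' g⁻¹).continuous
        simp only [hLdef, hRdef, alphaC, mul_one, inv_inv]
        exact this
    _ = ∑ g ∈ u, ∫ ξ, R g ξ ∂μ := by
        refine Finset.sum_nbij' (fun g => g⁻¹) (fun g => g⁻¹) (fun g hg => hu g hg)
          (fun g hg => hu g hg) (fun g _ => inv_inv g) (fun g _ => inv_inv g) ?_
        intro g hg
        rfl
    _ = ∫ ξ, crossMul actΛ (alphaC D actX x (t : ℂ) (fun g => ⇑(f' g)))
          (fun g => ⇑(f g)) 1 ξ ∂μ := by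
        rw [integral_congr_ae (Filter.Eventually.of_forall hRsum)]
        exact (integral_finset_sum u fun g _ => aux_integrable μ (hRcont g)).symm
end

section
/- Let H be a complex Hilbert space and let A, B, C : ℝ → B(H) be continuous in operator norm, with C(t) a compact operator for every t. Suppose T : ℝ → B(H) is differentiable in operator norm and satisfies T′(t) = A(t) ∘ T(t) + T(t) ∘ B(t) + C(t) for all t, and that T(0) is compact. Then T(t) is a compact operator for every t ∈ ℝ. -/
set_option synthInstance.maxHeartbeats 1000000
set_option maxHeartbeats 1000000

open Submodule

section Aux

variable {H : Type*} [NormedAddCommGroup H] [InnerProductSpace ℂ H] [CompleteSpace H]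

private lemma norm_mk_comp_left_le (K : Submodule ℂ (H →L[ℂ] H)) (A T : H →L[ℂ] H)
    (hA : ∀ S, S ∈ K → A.comp S ∈ K) :
    ‖(Submodule.Quotient.mk (A.comp T) : _ ⧸ K)‖ ≤
      ‖A‖ * ‖(Submodule.Quotient.mk T : _ ⧸ K)‖ := by
  refine le_of_forall_pos_le_add fun ε hε => ?_
  have hδ : (0:ℝ) < ε / (‖A‖ + 1) := div_pos hε (by positivity)
  obtain ⟨m, hm, hmlt⟩ := Submodule.Quotient.norm_mk_lt
    (Submodule.Quotient.mk T : _ ⧸ K) hδ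
  have hmem : T - m ∈ K := (Submodule.Quotient.eq K).mp hm.symm
  have key : (Submodule.Quotient.mk (A.comp T) : _ ⧸ K) = Submodule.Quotient.mk (A.comp m) := by
    rw [Submodule.Quotient.eq]
    have h : A.comp T - A.comp m = A.comp (T - m) := by
      rw [ContinuousLinearMap.comp_sub]
    rw [h]; exact hA _ hmem
  have h1 : ‖(Submodule.Quotient.mk (A.comp T) : _ ⧸ K)‖ ≤ ‖A.comp m‖ := by
    rw [key]; exact Submodule.Quotient.norm_mk_le (S := K) _
  have h2 : ‖A.comp m‖ ≤ ‖A‖ * ‖m‖ := A.opNorm_comp_le m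
  have h3 : ‖m‖ ≤ ‖(Submodule.Quotient.mk T : _ ⧸ K)‖ + ε / (‖A‖ + 1) := le_of_lt hmlt
  have hA0 : (0:ℝ) ≤ ‖A‖ := norm_nonneg _
  have hcancel : ε / (‖A‖ + 1) * (‖A‖ + 1) = ε := div_mul_cancel₀ ε (by positivity)
  nlinarith [mul_le_mul_of_nonneg_left h3 hA0]

private lemma norm_mk_comp_right_le (K : Submodule ℂ (H →L[ℂ] H)) (B T : H →L[ℂ] H)
    (hB : ∀ S, S ∈ K → S.comp B ∈ K) :
    ‖(Submodule.Quotient.mk (T.comp B) : _ ⧸ K)‖ ≤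
      ‖B‖ * ‖(Submodule.Quotient.mk T : _ ⧸ K)‖ := by
  refine le_of_forall_pos_le_add fun ε hε => ?_
  have hδ : (0:ℝ) < ε / (‖B‖ + 1) := div_pos hε (by positivity)
  obtain ⟨m, hm, hmlt⟩ := Submodule.Quotient.norm_mk_lt
    (Submodule.Quotient.mk T : _ ⧸ K) hδ
  have hmem : T - m ∈ K := (Submodule.Quotient.eq K).mp hm.symm
  have key : (Submodule.Quotient.mk (T.comp B) : _ ⧸ K) = Submodule.Quotient.mk (m.comp B) := by
    rw [Submodule.Quotient.eq]
    have h : T.comp B - m.comp B = (T - m).comp B := by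
      rw [ContinuousLinearMap.sub_comp]
    rw [h]; exact hB _ hmem
  have h1 : ‖(Submodule.Quotient.mk (T.comp B) : _ ⧸ K)‖ ≤ ‖m.comp B‖ := by
    rw [key]; exact Submodule.Quotient.norm_mk_le (S := K) _
  have h2 : ‖m.comp B‖ ≤ ‖m‖ * ‖B‖ := m.opNorm_comp_le B
  have h3 : ‖m‖ ≤ ‖(Submodule.Quotient.mk T : _ ⧸ K)‖ + ε / (‖B‖ + 1) := le_of_lt hmlt
  have hB0 : (0:ℝ) ≤ ‖B‖ := norm_nonneg _
  have hcancel : ε / (‖B‖ + 1) * (‖B‖ + 1) = ε := div_mul_cancel₀ ε (by positivity)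
  nlinarith [mul_le_mul_of_nonneg_left h3 hB0]

private lemma compactness_propagates_forward
    (A B C : ℝ → H →L[ℂ] H)
    (hA : Continuous A) (hB : Continuous B) (_hC : Continuous C)
    (hCcpt : ∀ t, IsCompactOperator (C t))
    (T : ℝ → H →L[ℂ] H)
    (hT : ∀ t : ℝ, HasDerivAt T ((A t).comp (T t) + (T t).comp (B t) + C t) t)
    (hT0 : IsCompactOperator (T 0)) :
    ∀ t : ℝ, 0 ≤ t → IsCompactOperator (T t) := by
  intro b hb
  set K : Submodule ℂ (H →L[ℂ] H) := compactOperator (RingHom.id ℂ) H H with hKdef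
  have hKmem : ∀ f : H →L[ℂ] H, f ∈ K ↔ IsCompactOperator f := fun f => Iff.rfl
  haveI : IsClosed (K : Set (H →L[ℂ] H)) := isClosed_setOf_isCompactOperator
  have hcompL : ∀ (A₀ : H →L[ℂ] H), ∀ S, S ∈ K → A₀.comp S ∈ K := by
    intro A₀ S hS
    rw [hKmem] at hS ⊢
    have := hS.clm_comp A₀
    simpa [ContinuousLinearMap.coe_comp'] using this
  have hcompR : ∀ (B₀ : H →L[ℂ] H), ∀ S, S ∈ K → S.comp B₀ ∈ K := by
    intro B₀ S hS
    rw [hKmem] at hS ⊢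
    have := hS.comp_clm B₀
    simpa [ContinuousLinearMap.coe_comp'] using this
  -- the quotient map as a continuous linear map
  let π : (H →L[ℂ] H) →L[ℂ] ((H →L[ℂ] H) ⧸ K) :=
    K.mkQ.mkContinuous 1 fun x => by
      simpa [one_mul] using Submodule.Quotient.norm_mk_le (S := K) x
  have hπapp : ∀ x : H →L[ℂ] H, π x = (Submodule.Quotient.mk x : _ ⧸ K) := fun _ => rfl
  set g : ℝ → (H →L[ℂ] H) ⧸ K := fun s => (Submodule.Quotient.mk (T s) : _ ⧸ K) with hgdef
  -- derivative of g
  have hg' : ∀ s : ℝ, HasDerivAt g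
      (Submodule.Quotient.mk ((A s).comp (T s) + (T s).comp (B s))) s := by
    intro s
    have h1 := (π.restrictScalars ℝ).hasFDerivAt.comp_hasDerivAt s (hT s)
    have hCs : (Submodule.Quotient.mk (C s) : _ ⧸ K) = 0 :=
      (Submodule.Quotient.mk_eq_zero K).mpr ((hKmem _).mpr (hCcpt s))
    have h2 : (π.restrictScalars ℝ) ((A s).comp (T s) + (T s).comp (B s) + C s)
        = Submodule.Quotient.mk ((A s).comp (T s) + (T s).comp (B s)) := by
      show (Submodule.Quotient.mk ((A s).comp (T s) + (T s).comp (B s) + C s) : _ ⧸ K) = _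
      rw [Submodule.Quotient.mk_add, hCs, add_zero]
    rw [h2] at h1
    exact h1
  -- bound on [0, b]
  obtain ⟨M, hM⟩ := (isCompact_Icc (a := (0:ℝ)) (b := b)).exists_bound_of_continuousOn
    (f := fun s => (‖A s‖ + ‖B s‖ : ℝ)) ((hA.norm.add hB.norm).continuousOn)
  have hTc : Continuous T := continuous_iff_continuousAt.mpr fun s => (hT s).continuousAt
  have hgc : ContinuousOn g (Set.Icc 0 b) :=
    (π.continuous.comp hTc).continuousOn
  have hg0 : ‖g 0‖ ≤ 0 := by
    have : g 0 = 0 := (Submodule.Quotient.mk_eq_zero K).mpr ((hKmem _).mpr hT0)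
    rw [this, norm_zero]
  have bound : ∀ s ∈ Set.Ico (0:ℝ) b,
      ‖(Submodule.Quotient.mk ((A s).comp (T s) + (T s).comp (B s)) : _ ⧸ K)‖
        ≤ M * ‖g s‖ + 0 := by
    intro s hs
    have hι : s ∈ Set.Icc (0:ℝ) b := ⟨hs.1, le_of_lt hs.2⟩
    have hMs : ‖A s‖ + ‖B s‖ ≤ M := by
      have := hM s hι
      exact (le_abs_self _).trans (by simpa [Real.norm_eq_abs] using this)
    have hadd : ‖(Submodule.Quotient.mk ((A s).comp (T s) + (T s).comp (B s)) : _ ⧸ K)‖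
        ≤ ‖(Submodule.Quotient.mk ((A s).comp (T s)) : _ ⧸ K)‖
          + ‖(Submodule.Quotient.mk ((T s).comp (B s)) : _ ⧸ K)‖ := by
      rw [Submodule.Quotient.mk_add]; exact norm_add_le _ _
    have hL := norm_mk_comp_left_le K (A s) (T s) (hcompL (A s))
    have hR := norm_mk_comp_right_le K (B s) (T s) (hcompR (B s))
    have hgs : (0:ℝ) ≤ ‖g s‖ := norm_nonneg _
    have : ‖g s‖ = ‖(Submodule.Quotient.mk (T s) : _ ⧸ K)‖ := rfl
    rw [this] at hgs ⊢
    nlinarith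
  have := norm_le_gronwallBound_of_norm_deriv_right_le hgc
    (fun s hs => (hg' s).hasDerivWithinAt) hg0 bound b ⟨hb, le_refl b⟩
  rw [gronwallBound_ε0_δ0] at this
  have hzero : g b = 0 := norm_le_zero_iff.mp this
  exact (hKmem _).mp ((Submodule.Quotient.mk_eq_zero K).mp hzero)

end Aux

/-- the Duhamel argument of equations (4.29)–(4.31) in the proof of
Proposition 4.23 of the paper: let `H` be a complex Hilbert space, `A B C : ℝ → B(H)`
norm-continuous with `C(t)` compact for every `t`.  If `T : ℝ → B(H)` is norm-differentiable
with `T′(t) = A(t) T(t) + T(t) B(t) + C(t)` for all `t` and `T(0)` is compact, then `T(t)`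
is compact for every `t`. -/
theorem compactness_propagates {H : Type*} [NormedAddCommGroup H]
    [InnerProductSpace ℂ H] [CompleteSpace H]
    (A B C : ℝ → H →L[ℂ] H)
    (hA : Continuous A) (hB : Continuous B) (hC : Continuous C)
    (hCcpt : ∀ t, IsCompactOperator (C t))
    (T : ℝ → H →L[ℂ] H)
    (hT : ∀ t : ℝ, HasDerivAt T ((A t).comp (T t) + (T t).comp (B t) + C t) t)
    (hT0 : IsCompactOperator (T 0)) :
    ∀ t : ℝ, IsCompactOperator (T t) := by
  intro t
  rcases le_or_gt 0 t with ht | ht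
  · exact compactness_propagates_forward A B C hA hB hC hCcpt T hT hT0 t ht
  · -- time reversal
    set A₂ : ℝ → H →L[ℂ] H := fun s => -(A (-s)) with hA₂def
    set B₂ : ℝ → H →L[ℂ] H := fun s => -(B (-s)) with hB₂def
    set C₂ : ℝ → H →L[ℂ] H := fun s => -(C (-s)) with hC₂def
    set T₂ : ℝ → H →L[ℂ] H := fun s => T (-s) with hT₂def
    have hA₂ : Continuous A₂ := (hA.comp continuous_neg).neg
    have hB₂ : Continuous B₂ := (hB.comp continuous_neg).neg
    have hC₂ : Continuous C₂ := (hC.comp continuous_neg).neg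
    have hC₂cpt : ∀ s, IsCompactOperator (C₂ s) := by
      intro s
      have := (hCcpt (-s)).neg
      simpa [hC₂def] using this
    have hT₂ : ∀ s : ℝ, HasDerivAt T₂
        ((A₂ s).comp (T₂ s) + (T₂ s).comp (B₂ s) + C₂ s) s := by
      intro s
      have h : HasDerivAt (T ∘ fun x : ℝ => -x)
          ((-1 : ℝ) • ((A (-s)).comp (T (-s)) + (T (-s)).comp (B (-s)) + C (-s))) s :=
        HasDerivAt.scomp s (hT (-s)) (hasDerivAt_neg s)
      have heq : ((-1 : ℝ) • ((A (-s)).comp (T (-s)) + (T (-s)).comp (B (-s)) + C (-s)))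
          = (A₂ s).comp (T₂ s) + (T₂ s).comp (B₂ s) + C₂ s := by
        simp [hA₂def, hB₂def, hC₂def, hT₂def, neg_smul, one_smul, neg_add,
          ContinuousLinearMap.neg_comp, ContinuousLinearMap.comp_neg]
      rw [heq] at h
      exact h
    have hT₂0 : IsCompactOperator (T₂ 0) := by simpa [hT₂def] using hT0
    have := compactness_propagates_forward A₂ B₂ C₂ hA₂ hB₂ hC₂ hC₂cpt T₂ hT₂ hT₂0
      (-t) (by linarith)
    simpa [hT₂def] using this
end

section
/- Let Λ be a compact metric space, (b_i)_{i∈ℕ} and (c_i)_{i∈ℕ} sequences in Λ with dist(b_i, c_i) → 0 as i → ∞, and a : Λ → ℂ continuous. On the Hilbert space H = ℓ²(ℕ ⊕ ℕ, ℂ), let M_a be the bounded diagonal operator multiplying the coordinate indexed by inl i by a(b_i) and the coordinate indexed by inr i by a(c_i), and let F be the bounded operator that exchanges, for every i, the coordinates indexed by inl i and inr i. Then the commutator F ∘ M_a − M_a ∘ F is a compact operator on H. -/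
/-!
Coordinatewise, the commutator is `v ↦ d • F v` with `d (inl i) = a (c i) - a (b i)` and
`d (inr i) = a (b i) - a (c i)`, and `d → 0` because `a` is uniformly continuous on the compact
space `Λ`. An operator into `ℓ^p` whose coordinates are those of a bounded operator scaled by a
sequence tending to `0` is the norm limit of its finite-rank truncations, hence compact.
-/

open Filter Topology
open scoped ENNReal

theorem Filter.Tendsto.sumElim_cofinite {α β γ : Type*} {f : α → γ} {g : β → γ} {l : Filter γ}
    (hf : Tendsto f cofinite l) (hg : Tendsto g cofinite l) :
    Tendsto (Sum.elim f g) cofinite l := by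
  rw [← map_comap_inl_sup_map_comap_inr cofinite, tendsto_sup, tendsto_map'_iff, tendsto_map'_iff,
    Sum.inl_injective.comap_cofinite_eq, Sum.inr_injective.comap_cofinite_eq]
  exact ⟨hf, hg⟩

theorem UniformContinuous.tendsto_dist_comp {α β ι : Type*} [PseudoMetricSpace α]
    [PseudoMetricSpace β] {f : α → β} (hf : UniformContinuous f) {b c : ι → α} {l : Filter ι}
    (hbc : Tendsto (fun i => dist (b i) (c i)) l (𝓝 0)) :
    Tendsto (fun i => dist (f (b i)) (f (c i))) l (𝓝 0) :=
  tendsto_uniformity_iff_dist_tendsto_zero.1 <|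
    Tendsto.comp hf (tendsto_uniformity_iff_dist_tendsto_zero (f := fun i => (b i, c i)).2 hbc)

namespace lp

variable {𝕜 ι : Type*} [NontriviallyNormedField 𝕜] {E : ι → Type*}
  [∀ i, NormedAddCommGroup (E i)] [∀ i, NormedSpace 𝕜 (E i)] {p : ℝ≥0∞} [Fact (1 ≤ p)]
  {X : Type*} [NormedAddCommGroup X] [NormedSpace 𝕜 X]

section Truncate

variable [DecidableEq ι]

variable (𝕜 E p) in
noncomputable def truncate (s : Finset ι) : lp E p →L[𝕜] lp E p :=
  ∑ j ∈ s, (singleContinuousLinearMap 𝕜 E p j).comp (evalCLM 𝕜 E p j)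

theorem truncate_eq_sum_single (s : Finset ι) (x : lp E p) :
    truncate 𝕜 E p s x = ∑ j ∈ s, lp.single p j (x j) := by
  simp [truncate, evalCLM]

theorem truncate_apply (s : Finset ι) (x : lp E p) (j : ι) :
    truncate 𝕜 E p s x j = if j ∈ s then x j else 0 := by
  rw [truncate_eq_sum_single, coeFn_sum, Finset.sum_apply]
  simp [lp.single_apply]

theorem isCompactOperator_truncate [∀ i, LocallyCompactSpace (E i)] (s : Finset ι) :
    IsCompactOperator (truncate 𝕜 E p s) := by
  refine Submodule.sum_mem (compactOperator _ _ _) fun j _ => ?_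
  exact (isCompactOperator_of_locallyCompactSpace_rng
    (singleContinuousLinearMap 𝕜 E p j)).comp_clm _

theorem norm_sub_truncate_comp_le {T S : X →L[𝕜] lp E p} {d : ι → 𝕜}
    (hT : ∀ x j, T x j = d j • S x j) {s : Finset ι} {c : 𝕜} (hc : ∀ j ∉ s, ‖d j‖ ≤ ‖c‖) :
    ‖T - (truncate 𝕜 E p s).comp T‖ ≤ ‖c‖ * ‖S‖ := by
  refine ContinuousLinearMap.opNorm_le_bound _ (by positivity) fun x => ?_
  calc ‖(T - (truncate 𝕜 E p s).comp T) x‖ ≤ ‖c • S x‖ := by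
        refine lp.norm_mono (zero_lt_one.trans_le Fact.out).ne' fun j => ?_
        by_cases hj : j ∈ s
        · simp [truncate_apply, hj]
        · simpa [truncate_apply, hj, hT, norm_smul] using
            mul_le_mul_of_nonneg_right (hc j hj) (norm_nonneg (S x j))
    _ ≤ ‖c‖ * ‖S‖ * ‖x‖ := by
        rw [norm_smul, mul_assoc]
        gcongr
        exact S.le_opNorm x

end Truncate

theorem isCompactOperator_of_apply_eq_smul [∀ i, ProperSpace (E i)] {T S : X →L[𝕜] lp E p}
    {d : ι → 𝕜} (hd : Tendsto d cofinite (𝓝 0)) (hT : ∀ x j, T x j = d j • S x j) : IsCompactOperator T := by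
  classical
  refine isCompactOperator_of_tendsto (l := atTop)
    (F := fun s : Finset ι => (truncate 𝕜 E p s).comp T) ?_
    (.of_forall fun s => (isCompactOperator_truncate s).comp_clm T)
  refine Metric.tendsto_nhds.2 fun ε hε => ?_
  obtain ⟨c, hc₀, hcε⟩ := NormedField.exists_norm_lt 𝕜 (by positivity : 0 < ε / (‖S‖ + 1))
  have hlarge : {j | ‖c‖ < ‖d j‖}.Finite := by
    simpa using eventually_cofinite.1 (hd.eventually (Metric.closedBall_mem_nhds 0 hc₀))
  filter_upwards [eventually_ge_atTop hlarge.toFinset] with s hs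
  rw [dist_comm, dist_eq_norm]
  calc ‖T - (truncate 𝕜 E p s).comp T‖ ≤ ‖c‖ * ‖S‖ :=
        norm_sub_truncate_comp_le hT fun j hj => not_lt.1 fun h => hj (hs (hlarge.mem_toFinset.2 h))
    _ < ε := by
        rw [lt_div_iff₀ (by positivity)] at hcε
        nlinarith [norm_nonneg c]

end lp

/-- the Fredholm-module condition for the Connes–Sullivan K-cycle on a
Cantor set, Section 4.5.4 of the paper: let `Λ` be a compact metric space, `(b_i)` and
`(c_i)` sequences in `Λ` with `dist (b_i) (c_i) → 0`, and `a : Λ → ℂ` continuous.  On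
`H = ℓ²(ℕ ⊕ ℕ, ℂ)`, if `M_a` is the bounded diagonal operator multiplying the coordinate
`inl i` by `a (b_i)` and the coordinate `inr i` by `a (c_i)`, and `F` is the bounded
operator exchanging the coordinates `inl i` and `inr i`, then `F M_a − M_a F` is compact. -/
theorem cantor_commutator_compact {Λ : Type*} [MetricSpace Λ] [CompactSpace Λ]
    (b c : ℕ → Λ) (hbc : Tendsto (fun i => dist (b i) (c i)) atTop (𝓝 0))
    (a : C(Λ, ℂ))
    (Ma F : lp (fun _ : ℕ ⊕ ℕ => ℂ) 2 →L[ℂ] lp (fun _ : ℕ ⊕ ℕ => ℂ) 2)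
    (hMa : ∀ (v : lp (fun _ : ℕ ⊕ ℕ => ℂ) 2) (i : ℕ),
      (Ma v : ∀ _ : ℕ ⊕ ℕ, ℂ) (Sum.inl i) = a (b i) * (v : ∀ _ : ℕ ⊕ ℕ, ℂ) (Sum.inl i) ∧
      (Ma v : ∀ _ : ℕ ⊕ ℕ, ℂ) (Sum.inr i) = a (c i) * (v : ∀ _ : ℕ ⊕ ℕ, ℂ) (Sum.inr i))
    (hF : ∀ (v : lp (fun _ : ℕ ⊕ ℕ => ℂ) 2) (i : ℕ),
      (F v : ∀ _ : ℕ ⊕ ℕ, ℂ) (Sum.inl i) = (v : ∀ _ : ℕ ⊕ ℕ, ℂ) (Sum.inr i) ∧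
      (F v : ∀ _ : ℕ ⊕ ℕ, ℂ) (Sum.inr i) = (v : ∀ _ : ℕ ⊕ ℕ, ℂ) (Sum.inl i)) :
    IsCompactOperator (F.comp Ma - Ma.comp F) := by
  have hab : Tendsto (fun i => a (b i) - a (c i)) cofinite (𝓝 0) := by
    rw [Nat.cofinite_eq_atTop, tendsto_zero_iff_norm_tendsto_zero]
    simpa [dist_eq_norm] using
      (CompactSpace.uniformContinuous_of_continuous a.continuous).tendsto_dist_comp hbc
  have hd : Tendsto (Sum.elim (fun i => a (c i) - a (b i)) (fun i => a (b i) - a (c i)))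
      cofinite (𝓝 0) :=
    .sumElim_cofinite (by simpa using hab.neg) hab
  refine lp.isCompactOperator_of_apply_eq_smul (S := F) hd fun v j => ?_
  rcases j with i | i <;> simp [hF, hMa] <;> ring
end
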